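/- Define k : ℝ → ℝ by k(u) = 1/2 + (1 + e^{−4u})^{−1}. Then k(0) = 1, k'(0) = 1, k''(0) = 0, and for every u ∈ ℝ one has |k(u) − 1| ≤ min(1, |u|) and |k(u) − 1 − u| ≤ 2 |u| min(1, u²). -/

import Mathlib

/-! `k(u) = 1/2 + σ(4u)` with `σ` the logistic sigmoid, so `σ' = σ(1 - σ)` turns into the
Riccati equation `k' = 1 - 4(k - 1)²`. The values at `0` follow from it, and it gives
`0 < k' ≤ 1` and `0 ≤ (u - (k - 1))' = 4(k - 1)² ≤ 4u²`; comparing increments with those of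
`u` and of `4u³/3` yields `|k(u) - 1| ≤ |u|` and `|k(u) - 1 - u| ≤ 4|u|³/3`. -/

/-- The perturbation function `k(u) = 1/2 + (1 + e^{−4u})⁻¹`. -/
noncomputable def kFun (u : ℝ) : ℝ := 1 / 2 + (1 + Real.exp (-4 * u))⁻¹

open Real

theorem abs_sub_le_abs_sub_of_abs_deriv_le {f F f' F' : ℝ → ℝ}
    (hf : ∀ x, HasDerivAt f (f' x) x) (hF : ∀ x, HasDerivAt F (F' x) x)
    (hle : ∀ x, |f' x| ≤ F' x) (a b : ℝ) : |f b - f a| ≤ |F b - F a| := by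
  have hmono : ∀ ε : ℝ, |ε| ≤ 1 → Monotone fun x => F x + ε * f x := fun ε hε =>
    monotone_of_deriv_nonneg (fun x => ((hF x).fun_add ((hf x).const_mul ε)).differentiableAt)
      fun x => by
        rw [((hF x).fun_add ((hf x).const_mul ε)).deriv]
        have : |ε * f' x| ≤ |f' x| := by
          rw [abs_mul]
          exact mul_le_of_le_one_left (abs_nonneg _) hε
        linarith [neg_abs_le (ε * f' x), hle x]
  have of_le : ∀ a b, a ≤ b → |f b - f a| ≤ |F b - F a| := fun a b hab => by
    have h₁ := hmono 1 (by norm_num) hab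
    have h₂ := hmono (-1) (by norm_num) hab
    simp only [one_mul, neg_one_mul] at h₁ h₂
    rw [abs_sub_le_iff]
    constructor <;> linarith [le_abs_self (F b - F a)]
  rcases le_total a b with hab | hba
  · exact of_le a b hab
  · rw [abs_sub_comm, abs_sub_comm (F b)]
    exact of_le b a hba

theorem kFun_eq_sigmoid (u : ℝ) : kFun u = 1 / 2 + sigmoid (4 * u) := by
  rw [kFun, sigmoid_def, neg_mul]

theorem kFun_zero : kFun 0 = 1 := by
  rw [kFun_eq_sigmoid, mul_zero, sigmoid_zero]
  norm_num

theorem abs_kFun_sub_one_lt (u : ℝ) : |kFun u - 1| < 1 / 2 := by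
  rw [kFun_eq_sigmoid, abs_lt]
  constructor <;> linarith [sigmoid_pos (4 * u), sigmoid_lt_one (4 * u)]

theorem hasDerivAt_kFun (u : ℝ) : HasDerivAt kFun (1 - 4 * (kFun u - 1) ^ 2) u := by
  have h := ((hasDerivAt_sigmoid (4 * u)).comp u ((hasDerivAt_id' u).const_mul 4)).const_add (1 / 2)
  rw [funext kFun_eq_sigmoid]
  exact h.congr_deriv (by ring)

theorem deriv_kFun_zero : deriv kFun 0 = 1 := by
  rw [(hasDerivAt_kFun 0).deriv, kFun_zero]
  norm_num

theorem iteratedDeriv_two_kFun_zero : iteratedDeriv 2 kFun 0 = 0 := by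
  have h := ((((hasDerivAt_kFun 0).sub_const 1).fun_pow 2).const_mul 4).const_sub 1
  rw [iteratedDeriv_succ, iteratedDeriv_one, funext fun u => (hasDerivAt_kFun u).deriv, h.deriv,
    kFun_zero]
  norm_num

theorem abs_kFun_sub_one_le (u : ℝ) : |kFun u - 1| ≤ |u| := by
  have hk' : ∀ x, |1 - 4 * (kFun x - 1) ^ 2| ≤ 1 := fun x => by
    have := abs_kFun_sub_one_lt x
    rw [abs_le]
    constructor <;> nlinarith [abs_nonneg (kFun x - 1), sq_abs (kFun x - 1)]
  simpa [kFun_zero] using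
    abs_sub_le_abs_sub_of_abs_deriv_le (F' := fun _ => 1) hasDerivAt_kFun hasDerivAt_id' hk' 0 u

theorem abs_kFun_sub_one_sub_le (u : ℝ) : |kFun u - 1 - u| ≤ 4 / 3 * |u| ^ 3 := by
  have hf : ∀ x, HasDerivAt (fun x => kFun x - 1 - x) (-(4 * (kFun x - 1) ^ 2)) x := fun x =>
    (((hasDerivAt_kFun x).sub_const 1).fun_sub (hasDerivAt_id' x)).congr_deriv (by ring)
  have hF : ∀ x, HasDerivAt (fun x : ℝ => 4 / 3 * x ^ 3) (4 * x ^ 2) x := fun x =>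
    ((hasDerivAt_pow 3 x).const_mul (4 / 3)).congr_deriv (by norm_num; ring)
  have h := abs_sub_le_abs_sub_of_abs_deriv_le hf hF (fun x => by
    rw [abs_neg, abs_of_nonneg (by positivity), ← sq_abs, ← sq_abs x]
    gcongr 4 * ?_ ^ 2
    exact abs_kFun_sub_one_le x) 0 u
  simpa [kFun_zero, abs_mul, abs_pow, abs_of_pos] using h

/-- Basic properties of `k`: `k(0) = 1`, `k'(0) = 1`, `k''(0) = 0`, and for all `u`,
`|k(u) − 1| ≤ min(1, |u|)` and `|k(u) − 1 − u| ≤ 2|u| min(1, u²)`. -/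
theorem kFun_properties :
    kFun 0 = 1 ∧
    deriv kFun 0 = 1 ∧
    iteratedDeriv 2 kFun 0 = 0 ∧
    (∀ u : ℝ, |kFun u - 1| ≤ min 1 |u|) ∧
    (∀ u : ℝ, |kFun u - 1 - u| ≤ 2 * |u| * min 1 (u ^ 2)) := by
  refine ⟨kFun_zero, deriv_kFun_zero, iteratedDeriv_two_kFun_zero, fun u => ?_, fun u => ?_⟩
  · exact le_min (by linarith [abs_kFun_sub_one_lt u]) (abs_kFun_sub_one_le u)
  · rw [mul_min_of_nonneg _ _ (by positivity)]
    refine le_min ?_ ?_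
    · calc |kFun u - 1 - u| ≤ |kFun u - 1| + |u| := abs_sub _ _
        _ ≤ 2 * |u| * 1 := by linarith [abs_kFun_sub_one_le u]
    · calc |kFun u - 1 - u| ≤ 4 / 3 * |u| ^ 3 := abs_kFun_sub_one_sub_le u
        _ ≤ 2 * |u| * u ^ 2 := by rw [← sq_abs u]; nlinarith [pow_nonneg (abs_nonneg u) 3]
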